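/- arXiv:1002.2551 — 10 statements merged into one kernel-verified Lean document; each statement's English description precedes it below -/
import Mathlib

section
/- Let 𝒜 be a unital C*-algebra and A, B ∈ 𝒜 elements satisfying A² = A*, B² = B*, AB + BA = 0, AB* = 0, BA* = 0, and AA* + BB* = 1. Then A³ + B³ = 1, A³ and B³ are self-adjoint idempotents (projections), and AB = BA = 0. -/
/-!
From `A ^ 2 = A*` we get `A ^ 3 = AA* = A*A` and `A ^ 6 = (A*) ^ 3 = (A ^ 3)*`, so `A ^ 3` is a
projection; likewise for `B`, and `A ^ 3 + B ^ 3 = AA* + BB* = 1`. Substituting `BB* = 1 - AA*`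
gives `(AB)(AB)* = AA* - A ^ 2 (A ^ 2)* = AA* - A*A = 0`, so the C*-identity forces `AB = 0`,
and then `BA = -AB = 0`.
-/

section SqEqStar

variable {R : Type*} [Monoid R] [StarMul R] {a : R}

theorem pow_three_eq_star_mul_self_of_sq_eq_star (ha : a ^ 2 = star a) : a ^ 3 = star a * a := by
  rw [pow_succ, ha]

theorem pow_three_eq_mul_star_self_of_sq_eq_star (ha : a ^ 2 = star a) : a ^ 3 = a * star a := by
  rw [pow_succ', ha]

theorem isSelfAdjoint_pow_three_of_sq_eq_star (ha : a ^ 2 = star a) : IsSelfAdjoint (a ^ 3) := by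
  rw [pow_three_eq_mul_star_self_of_sq_eq_star ha]
  exact IsSelfAdjoint.mul_star_self a

theorem isIdempotentElem_pow_three_of_sq_eq_star (ha : a ^ 2 = star a) :
    IsIdempotentElem (a ^ 3) :=
  calc a ^ 3 * a ^ 3 = (a ^ 2) ^ 3 := by rw [← pow_add, ← pow_mul]
    _ = star (a ^ 3) := by rw [ha, star_pow]
    _ = a ^ 3 := (isSelfAdjoint_pow_three_of_sq_eq_star ha).star_eq

end SqEqStar

theorem mul_mul_star_mul_eq_zero_of_sq_eq_star {R : Type*} [Ring R] [StarRing R] {a b : R}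
    (ha : a ^ 2 = star a) (hunit : a * star a + b * star b = 1) :
    a * b * star (a * b) = 0 := by
  have hbb : b * star b = 1 - a * star a := eq_sub_of_add_eq' hunit
  have haa : a * a * star (a * a) = star a * a := by rw [← sq, ha, star_star]
  calc a * b * star (a * b) = a * (b * star b) * star a := by rw [star_mul]; noncomm_ring
    _ = a * star a - a * a * star (a * a) := by rw [hbb, star_mul]; noncomm_ring
    _ = 0 := by
      rw [haa, ← pow_three_eq_mul_star_self_of_sq_eq_star ha,
        ← pow_three_eq_star_mul_self_of_sq_eq_star ha, sub_self]

theorem qiso_Z3_relations_general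
    {𝒜 : Type*} [NormedRing 𝒜] [StarRing 𝒜] [CStarRing 𝒜]
    (A B : 𝒜)
    (hA : A ^ 2 = star A) (hB : B ^ 2 = star B)
    (hAB : A * B + B * A = 0)
    (hunit : A * star A + B * star B = 1) :
    A ^ 3 + B ^ 3 = 1 ∧
    (star (A ^ 3) = A ^ 3 ∧ A ^ 3 * A ^ 3 = A ^ 3) ∧
    (star (B ^ 3) = B ^ 3 ∧ B ^ 3 * B ^ 3 = B ^ 3) ∧
    A * B = 0 ∧ B * A = 0 := by
  have hAB_zero : A * B = 0 :=
    CStarRing.mul_star_self_eq_zero_iff _ |>.mp (mul_mul_star_mul_eq_zero_of_sq_eq_star hA hunit)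
  refine ⟨?_, ⟨(isSelfAdjoint_pow_three_of_sq_eq_star hA).star_eq,
      isIdempotentElem_pow_three_of_sq_eq_star hA⟩,
    ⟨(isSelfAdjoint_pow_three_of_sq_eq_star hB).star_eq,
      isIdempotentElem_pow_three_of_sq_eq_star hB⟩, hAB_zero, ?_⟩
  · rw [pow_three_eq_mul_star_self_of_sq_eq_star hA, pow_three_eq_mul_star_self_of_sq_eq_star hB,
      hunit]
  · rwa [hAB_zero, zero_add] at hAB

/-- In a unital C*-algebra, if `A² = A*`, `B² = B*`, `AB + BA = 0`,
`AB* = 0`, `BA* = 0` and `AA* + BB* = 1`, then `A³ + B³ = 1`, `A³` and `B³` are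
projections, and `AB = BA = 0`. (Relations for `QISO⁺(ℤ₃)`.) -/
theorem qiso_Z3_relations
    {𝒜 : Type*} [NormedRing 𝒜] [StarRing 𝒜] [CStarRing 𝒜] [CompleteSpace 𝒜]
    [NormedAlgebra ℂ 𝒜] [StarModule ℂ 𝒜]
    (A B : 𝒜)
    (hA : A ^ 2 = star A) (hB : B ^ 2 = star B)
    (hAB : A * B + B * A = 0)
    (hABs : A * star B = 0) (hBAs : B * star A = 0)
    (hunit : A * star A + B * star B = 1) :
    A ^ 3 + B ^ 3 = 1 ∧
    (star (A ^ 3) = A ^ 3 ∧ A ^ 3 * A ^ 3 = A ^ 3) ∧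
    (star (B ^ 3) = B ^ 3 ∧ B ^ 3 * B ^ 3 = B ^ 3) ∧
    A * B = 0 ∧ B * A = 0 :=
  qiso_Z3_relations_general A B hA hB hAB hunit
end

section
/- Let n ≥ 5 be an integer, 𝒜 a unital C*-algebra, and A, B ∈ 𝒜 normal elements satisfying AB + BA = 0, A*B + BA* = 0, A²B = 0, B²A = 0, A^{n−1} = A*, B^{n−1} = B*, and AA* + BB* = 1. Then AB = BA = 0, Aⁿ and Bⁿ are self-adjoint idempotents (projections), and Aⁿ + Bⁿ = 1. -/
/-!
Multiplying `AA* + BB* = 1` on the right by `A` and using `BB* = B^n` and `B^n A = 0`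
(from `B²A = 0`) shows `AA*A = A`, so `A` is a partial isometry and `Aⁿ = AA*` is a
projection; symmetrically for `B`, and then `Aⁿ + Bⁿ = AA* + BB* = 1`. For `AB = 0` the
C*-identity reduces to `AB(AB)* = A Bⁿ Aⁿ⁻¹ = 0`.
-/

theorem pow_mul_pow_eq_zero_of_sq_mul_eq_zero {M : Type*} [MonoidWithZero M] {a b : M}
    (h : b ^ 2 * a = 0) {i k : ℕ} (hi : 2 ≤ i) (hk : k ≠ 0) : b ^ i * a ^ k = 0 := by
  obtain ⟨i, rfl⟩ := Nat.exists_eq_add_of_le' hi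
  obtain ⟨k, rfl⟩ := Nat.exists_eq_succ_of_ne_zero hk
  rw [pow_add, pow_succ' a, mul_assoc, ← mul_assoc (b ^ 2), h, zero_mul, mul_zero]

theorem pow_eq_mul_star_of_pow_pred_eq_star {R : Type*} [Monoid R] [Star R] {a : R} {n : ℕ}
    (hn : n ≠ 0) (ha : a ^ (n - 1) = star a) : a ^ n = a * star a := by
  rw [← ha, ← pow_succ', Nat.sub_add_cancel (Nat.one_le_iff_ne_zero.mpr hn)]

theorem isStarProjection_mul_star_self {R : Type*} [Semigroup R] [StarMul R] {a : R}
    (h : a * star a * a = a) : IsStarProjection (a * star a) where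
  isIdempotentElem := by rw [IsIdempotentElem, ← mul_assoc, h]
  isSelfAdjoint := by rw [IsSelfAdjoint, star_mul, star_star]

section PowPredEqStar

variable {R : Type*} {a b : R} {n : ℕ}

theorem mul_star_mul_self_of_add_mul_star_eq_one [Ring R] [Star R] (hn : 2 ≤ n)
    (hb : b ^ (n - 1) = star b) (hba : b ^ 2 * a = 0) (hunit : a * star a + b * star b = 1) :
    a * star a * a = a := by
  have hbb : b * star b * a = 0 := by
    rw [← pow_eq_mul_star_of_pow_pred_eq_star (by omega) hb, ← pow_one a]
    exact pow_mul_pow_eq_zero_of_sq_mul_eq_zero hba hn one_ne_zero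
  simpa [add_mul, hbb] using congrArg (· * a) hunit

theorem mul_eq_zero_of_pow_pred_eq_star [NormedRing R] [StarRing R] [CStarRing R]
    (hn : 2 ≤ n) (ha : a ^ (n - 1) = star a) (hb : b ^ (n - 1) = star b) (hba : b ^ 2 * a = 0) :
    a * b = 0 := by
  have hbnan : b ^ n * a ^ (n - 1) = 0 :=
    pow_mul_pow_eq_zero_of_sq_mul_eq_zero hba hn (by omega)
  refine (CStarRing.mul_star_self_eq_zero_iff _).mp ?_
  calc a * b * star (a * b) = a * (b * star b) * a ^ (n - 1) := by
        rw [star_mul, ← ha]; noncomm_ring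
    _ = 0 := by
        rw [← pow_eq_mul_star_of_pow_pred_eq_star (by omega) hb, mul_assoc, hbnan, mul_zero]

end PowPredEqStar

theorem qiso_Zn_relations_general
    {𝒜 : Type*} [NormedRing 𝒜] [StarRing 𝒜] [CStarRing 𝒜]
    (n : ℕ) (hn : 5 ≤ n)
    (A B : 𝒜)
    (h1 : A * B + B * A = 0)
    (h3 : A ^ 2 * B = 0) (h4 : B ^ 2 * A = 0)
    (h5 : A ^ (n - 1) = star A) (h6 : B ^ (n - 1) = star B)
    (hunit : A * star A + B * star B = 1) :
    A * B = 0 ∧ B * A = 0 ∧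
    (star (A ^ n) = A ^ n ∧ A ^ n * A ^ n = A ^ n) ∧
    (star (B ^ n) = B ^ n ∧ B ^ n * B ^ n = B ^ n) ∧
    A ^ n + B ^ n = 1 := by
  have hn2 : 2 ≤ n := by omega
  have hAB : A * B = 0 := mul_eq_zero_of_pow_pred_eq_star hn2 h5 h6 h4
  have hBA : B * A = 0 := by rwa [hAB, zero_add] at h1
  have hAn := pow_eq_mul_star_of_pow_pred_eq_star (by omega) h5
  have hBn := pow_eq_mul_star_of_pow_pred_eq_star (by omega) h6
  have hunit' : B * star B + A * star A = 1 := by rwa [add_comm] at hunit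
  have hPA := isStarProjection_mul_star_self
    (mul_star_mul_self_of_add_mul_star_eq_one hn2 h6 h4 hunit)
  have hPB := isStarProjection_mul_star_self
    (mul_star_mul_self_of_add_mul_star_eq_one hn2 h5 h3 hunit')
  rw [hAn, hBn]
  exact ⟨hAB, hBA, ⟨hPA.isSelfAdjoint, hPA.isIdempotentElem⟩,
    ⟨hPB.isSelfAdjoint, hPB.isIdempotentElem⟩, hunit⟩

/-- In a unital C*-algebra, let `n ≥ 5` and let `A`, `B` be normal
elements with `AB + BA = 0`, `A*B + BA* = 0`, `A²B = 0`, `B²A = 0`, `A^{n-1} = A*`,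
`B^{n-1} = B*` and `AA* + BB* = 1`. Then `AB = BA = 0`, `Aⁿ` and `Bⁿ` are projections
and `Aⁿ + Bⁿ = 1`. (Relations for `QISO⁺(ℤₙ)`, `n ≥ 5`.) -/
theorem qiso_Zn_relations
    {𝒜 : Type*} [NormedRing 𝒜] [StarRing 𝒜] [CStarRing 𝒜] [CompleteSpace 𝒜]
    [NormedAlgebra ℂ 𝒜] [StarModule ℂ 𝒜]
    (n : ℕ) (hn : 5 ≤ n)
    (A B : 𝒜)
    (hAnormal : A * star A = star A * A) (hBnormal : B * star B = star B * B)
    (h1 : A * B + B * A = 0)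
    (h2 : star A * B + B * star A = 0)
    (h3 : A ^ 2 * B = 0) (h4 : B ^ 2 * A = 0)
    (h5 : A ^ (n - 1) = star A) (h6 : B ^ (n - 1) = star B)
    (hunit : A * star A + B * star B = 1) :
    A * B = 0 ∧ B * A = 0 ∧
    (star (A ^ n) = A ^ n ∧ A ^ n * A ^ n = A ^ n) ∧
    (star (B ^ n) = B ^ n ∧ B ^ n * B ^ n = B ^ n) ∧
    A ^ n + B ^ n = 1 :=
  qiso_Zn_relations_general n hn A B h1 h3 h4 h5 h6 hunit
end

section
/- There exist self-adjoint 2×2 complex matrices A and B such that A² + B² = 1, AB + BA = 0, A²B + B³ = B, B²A + A³ = A, AA* + BB* = 1, and AB ≠ BA. (Witnesses: A = σ₁/√2 and B = σ₂/√2, where σ₁ = [[0,1],[1,0]] and σ₂ = [[0,−i],[i,0]] are Pauli matrices. Consequently the C*-algebra QISO⁺(ℤ₄, {1,3}), defined by these relations, is noncommutative.) -/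
/-! The Pauli matrices `σ₁, σ₂` are anticommuting self-adjoint involutions, so `A = σ₁/√2` and
`B = σ₂/√2` are self-adjoint with `A² + B² = 1` and `AB + BA = 0`. The cubic relations are
`(A² + B²)B = B` and its mirror image, and `AA* + BB* = A² + B²`. If also `AB = BA`, then
`2AB = 0`, impossible since `AB` is a unit. -/

open Matrix

section AnticommutingSymmetries

variable {R : Type*} [Ring R]

theorem sq_mul_add_pow_three_of_sq_add_sq_eq_one {A B : R} (h : A ^ 2 + B ^ 2 = 1) :
    A ^ 2 * B + B ^ 3 = B := by
  rw [pow_succ B 2, ← add_mul, h, one_mul]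

theorem mul_ne_mul_of_mul_add_mul_eq_zero [Nontrivial R] {A B : R} (h2 : IsUnit (2 : R))
    (hAB : IsUnit (A * B)) (h : A * B + B * A = 0) : A * B ≠ B * A := by
  intro hcomm
  rw [← hcomm, ← two_mul] at h
  exact (h2.mul hAB).ne_zero h

variable [Algebra ℝ R] {X Y : R} {c : ℝ}

theorem smul_sq_add_smul_sq_eq_one (hX : X ^ 2 = 1) (hY : Y ^ 2 = 1) (hc : c ^ 2 = 1 / 2) :
    (c • X) ^ 2 + (c • Y) ^ 2 = 1 := by
  rw [smul_pow, smul_pow, hX, hY, hc, ← add_smul]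
  norm_num

theorem smul_mul_smul_add_eq_zero (h : X * Y + Y * X = 0) :
    (c • X) * (c • Y) + (c • Y) * (c • X) = 0 := by
  rw [smul_mul_smul, smul_mul_smul, ← smul_add, h, smul_zero]

theorem isUnit_smul_mul_smul (hX : X ^ 2 = 1) (hY : Y ^ 2 = 1) (hc : c ≠ 0) :
    IsUnit ((c • X) * (c • Y)) := by
  rw [smul_mul_smul, Algebra.smul_def]
  exact ((isUnit_iff_ne_zero.2 (mul_ne_zero hc hc)).map (algebraMap ℝ R)).mul
    ((IsUnit.of_pow_eq_one hX two_ne_zero).mul (IsUnit.of_pow_eq_one hY two_ne_zero))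

theorem smul_mul_smul_ne_smul_mul_smul [Nontrivial R] (hX : X ^ 2 = 1) (hY : Y ^ 2 = 1)
    (hc : c ≠ 0) (h : X * Y + Y * X = 0) : (c • X) * (c • Y) ≠ (c • Y) * (c • X) := by
  have h2 : IsUnit (2 : R) := by
    rw [← map_ofNat (algebraMap ℝ R) 2]
    exact (isUnit_iff_ne_zero.2 (two_ne_zero' ℝ)).map _
  exact mul_ne_mul_of_mul_add_mul_eq_zero h2 (isUnit_smul_mul_smul hX hY hc)
    (smul_mul_smul_add_eq_zero h)

end AnticommutingSymmetries

def pauliX : Matrix (Fin 2) (Fin 2) ℂ := !![0, 1; 1, 0]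

def pauliY : Matrix (Fin 2) (Fin 2) ℂ := !![0, -Complex.I; Complex.I, 0]

theorem isSelfAdjoint_pauliX : IsSelfAdjoint pauliX := by
  rw [IsSelfAdjoint, star_eq_conjTranspose]
  ext i j
  fin_cases i <;> fin_cases j <;> simp [pauliX]

theorem isSelfAdjoint_pauliY : IsSelfAdjoint pauliY := by
  rw [IsSelfAdjoint, star_eq_conjTranspose]
  ext i j
  fin_cases i <;> fin_cases j <;> simp [pauliY]

theorem pauliX_sq : pauliX ^ 2 = 1 := by
  simp [pauliX, sq, one_fin_two]

theorem pauliY_sq : pauliY ^ 2 = 1 := by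
  simp [pauliY, sq, one_fin_two]

theorem pauliX_mul_pauliY_add_pauliY_mul_pauliX : pauliX * pauliY + pauliY * pauliX = 0 := by
  ext i j
  fin_cases i <;> fin_cases j <;> simp [pauliX, pauliY]

/-- There exist self-adjoint `2 × 2` complex matrices `A`, `B` with
`A² + B² = 1`, `AB + BA = 0`, `A²B + B³ = B`, `B²A + A³ = A`, `AA* + BB* = 1` and
`AB ≠ BA`.  (Witnesses: `A = σ₁/√2`, `B = σ₂/√2`; hence `QISO⁺(ℤ₄, {1,3})` is
noncommutative.) -/
theorem exists_noncommuting_qiso_Z4_relations :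
    ∃ A B : Matrix (Fin 2) (Fin 2) ℂ,
      IsSelfAdjoint A ∧ IsSelfAdjoint B ∧
      A ^ 2 + B ^ 2 = 1 ∧
      A * B + B * A = 0 ∧
      A ^ 2 * B + B ^ 3 = B ∧
      B ^ 2 * A + A ^ 3 = A ∧
      A * star A + B * star B = 1 ∧
      A * B ≠ B * A := by
  set c : ℝ := (√2)⁻¹
  have hc : c ^ 2 = 1 / 2 := by rw [inv_pow, Real.sq_sqrt zero_le_two, one_div]
  have hA : IsSelfAdjoint (c • pauliX) := (IsSelfAdjoint.all c).smul isSelfAdjoint_pauliX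
  have hB : IsSelfAdjoint (c • pauliY) := (IsSelfAdjoint.all c).smul isSelfAdjoint_pauliY
  have hsq := smul_sq_add_smul_sq_eq_one pauliX_sq pauliY_sq hc
  have hanti := smul_mul_smul_add_eq_zero (c := c) pauliX_mul_pauliY_add_pauliY_mul_pauliX
  refine ⟨c • pauliX, c • pauliY, hA, hB, hsq, hanti,
    sq_mul_add_pow_three_of_sq_add_sq_eq_one hsq,
    sq_mul_add_pow_three_of_sq_add_sq_eq_one ((add_comm _ _).trans hsq), ?_, ?_⟩
  · rwa [hA.star_eq, hB.star_eq, ← sq, ← sq]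
  · exact smul_mul_smul_ne_smul_mul_smul pauliX_sq pauliY_sq (by positivity)
      pauliX_mul_pauliY_add_pauliY_mul_pauliX
end

section
/- Let 𝒜 be a unital C*-algebra and A, B, C, D ∈ 𝒜 self-adjoint elements satisfying A² + B² = 1, C² + D² = 1, AB = BA = 0, CD = DC = 0, and AC + BD = 0. Then A², B², C², D² are projections, C² = B², and D² = A². -/
/-! Multiplying `AC + BD = 0` on the left by `A` and by `B` gives `A²C = 0` and `B²D = 0`.
So `1 = A² + B²` and `1 = C² + D²` are two decompositions of unity with `A²C² = B²D² = 0`,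
which forces `C² = B²C² = B²` and `D² = A²D² = A²`; idempotency of the squares is the same
computation for a single decomposition `1 = p + q` with `pq = 0`. -/

section

variable {R : Type*}

lemma sq_mul_sq_eq_zero_of_mul_eq_zero [MonoidWithZero R] {a b : R} (h : a * b = 0) :
    a ^ 2 * b ^ 2 = 0 := by
  rw [sq, sq, mul_assoc, ← mul_assoc a b b, h, zero_mul, mul_zero]

lemma sq_mul_sq_eq_zero_of_mul_add_mul_eq_zero [Semiring R] {a b c d : R}
    (hab : a * b = 0) (h : a * c + b * d = 0) : a ^ 2 * c ^ 2 = 0 := by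
  have hac : a ^ 2 * c = 0 := by
    calc a ^ 2 * c = a * (a * c + b * d) := by
          rw [mul_add, ← mul_assoc, ← mul_assoc, hab, zero_mul, add_zero, sq]
      _ = 0 := by rw [h, mul_zero]
  rw [sq c, ← mul_assoc, hac, zero_mul]

lemma isStarProjection_sq_of_sq_add_sq_eq_one [Semiring R] [StarRing R] {a b : R}
    (ha : IsSelfAdjoint a) (hb : IsSelfAdjoint b) (h : a ^ 2 + b ^ 2 = 1) (hab : a * b = 0) :
    IsStarProjection (a ^ 2) ∧ IsStarProjection (b ^ 2) :=
  have hidem := IsIdempotentElem.of_mul_add (sq_mul_sq_eq_zero_of_mul_eq_zero hab) h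
  ⟨⟨hidem.1, ha.pow 2⟩, ⟨hidem.2, hb.pow 2⟩⟩

lemma eq_of_add_eq_one_of_mul_eq_zero [Semiring R] {p q r s : R}
    (hpq : p + q = 1) (hrs : r + s = 1) (hpr : p * r = 0) (hqs : q * s = 0) : r = q :=
  calc r = (p + q) * r := by rw [hpq, one_mul]
    _ = q * (r + s) := by rw [add_mul, hpr, zero_add, mul_add, hqs, add_zero]
    _ = q := by rw [hrs, mul_one]

end

theorem qiso_S3_transpositions_projections_general
    {𝒜 : Type*} [NormedRing 𝒜] [StarRing 𝒜]
    (A B C D : 𝒜)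
    (hA : star A = A) (hB : star B = B) (hC : star C = C) (hD : star D = D)
    (h1 : A ^ 2 + B ^ 2 = 1) (h2 : C ^ 2 + D ^ 2 = 1)
    (h3 : A * B = 0) (h4 : B * A = 0)
    (h5 : C * D = 0)
    (h7 : A * C + B * D = 0) :
    (star (A ^ 2) = A ^ 2 ∧ A ^ 2 * A ^ 2 = A ^ 2) ∧
    (star (B ^ 2) = B ^ 2 ∧ B ^ 2 * B ^ 2 = B ^ 2) ∧
    (star (C ^ 2) = C ^ 2 ∧ C ^ 2 * C ^ 2 = C ^ 2) ∧
    (star (D ^ 2) = D ^ 2 ∧ D ^ 2 * D ^ 2 = D ^ 2) ∧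
    C ^ 2 = B ^ 2 ∧ D ^ 2 = A ^ 2 := by
  obtain ⟨pA, pB⟩ := isStarProjection_sq_of_sq_add_sq_eq_one hA hB h1 h3
  obtain ⟨pC, pD⟩ := isStarProjection_sq_of_sq_add_sq_eq_one hC hD h2 h5
  have hAC : A ^ 2 * C ^ 2 = 0 := sq_mul_sq_eq_zero_of_mul_add_mul_eq_zero h3 h7
  have hBD : B ^ 2 * D ^ 2 = 0 :=
    sq_mul_sq_eq_zero_of_mul_add_mul_eq_zero h4 ((add_comm _ _).trans h7)
  have hCB : C ^ 2 = B ^ 2 := eq_of_add_eq_one_of_mul_eq_zero h1 h2 hAC hBD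
  have hDA : D ^ 2 = A ^ 2 :=
    eq_of_add_eq_one_of_mul_eq_zero ((add_comm _ _).trans h1) ((add_comm _ _).trans h2) hBD hAC
  exact ⟨⟨pA.2, pA.1⟩, ⟨pB.2, pB.1⟩, ⟨pC.2, pC.1⟩, ⟨pD.2, pD.1⟩, hCB, hDA⟩

/-- In a unital C*-algebra, let `A, B, C, D` be self-adjoint with
`A² + B² = 1`, `C² + D² = 1`, `AB = BA = 0`, `CD = DC = 0` and `AC + BD = 0`.
Then `A², B², C², D²` are projections, `C² = B²` and `D² = A²`.
(Relations for `QISO⁺(S₃)` with the generating set of two transpositions.) -/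
theorem qiso_S3_transpositions_projections
    {𝒜 : Type*} [NormedRing 𝒜] [StarRing 𝒜] [CStarRing 𝒜] [CompleteSpace 𝒜]
    [NormedAlgebra ℂ 𝒜] [StarModule ℂ 𝒜]
    (A B C D : 𝒜)
    (hA : star A = A) (hB : star B = B) (hC : star C = C) (hD : star D = D)
    (h1 : A ^ 2 + B ^ 2 = 1) (h2 : C ^ 2 + D ^ 2 = 1)
    (h3 : A * B = 0) (h4 : B * A = 0)
    (h5 : C * D = 0) (h6 : D * C = 0)
    (h7 : A * C + B * D = 0) :
    (star (A ^ 2) = A ^ 2 ∧ A ^ 2 * A ^ 2 = A ^ 2) ∧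
    (star (B ^ 2) = B ^ 2 ∧ B ^ 2 * B ^ 2 = B ^ 2) ∧
    (star (C ^ 2) = C ^ 2 ∧ C ^ 2 * C ^ 2 = C ^ 2) ∧
    (star (D ^ 2) = D ^ 2 ∧ D ^ 2 * D ^ 2 = D ^ 2) ∧
    C ^ 2 = B ^ 2 ∧ D ^ 2 = A ^ 2 :=
  qiso_S3_transpositions_projections_general A B C D hA hB hC hD h1 h2 h3 h4 h5 h7
end

section
/- Let 𝒜 be a unital C*-algebra and A, B, C, D ∈ 𝒜 self-adjoint elements satisfying A² + B² = 1, C² + D² = 1, AB = BA = 0, CD = DC = 0, AC + BD = 0, CA + DB = 0, and DAD + CBC = ADA + BCB. Then DAD = ADA and CBC = BCB. -/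
/-!
Put `X = DAD - ADA` and `Y = CBC - BCB`, so that the last relation says `Y = -X`. Using only
the ring relations, the four products `DAD·CBC`, `ADA·BCB`, `CBC·DAD`, `BCB·ADA` vanish and the
remaining cross terms cancel in pairs (each is `±(CA)³` or `±(BD)³`), so `XY + YX = 0`. With
`Y = -X` this gives `2X² = 0`, hence `X² = 0`, and the C*-identity `‖X‖² = ‖X*X‖` for the
self-adjoint `X` forces `X = 0`.
-/

theorem braid_cross_terms_cancel {R : Type*} [Ring R] {a b c d : R}
    (hac : a * c + b * d = 0) (hca : c * a + d * b = 0) :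
    d * a * d * (b * c * b) + c * b * c * (a * d * a) = 0 := by
  have hac' : a * c = -(b * d) := eq_neg_of_add_eq_zero_left hac
  have hbd : b * d = -(a * c) := eq_neg_of_add_eq_zero_right hac
  have hca' : c * a = -(d * b) := eq_neg_of_add_eq_zero_left hca
  have hdb : d * b = -(c * a) := eq_neg_of_add_eq_zero_right hca
  have h₁ : d * a * d * (b * c * b) = (c * a) ^ 3 :=
    calc d * a * d * (b * c * b) = d * a * (d * b) * c * b := by noncomm_ring
      _ = -(d * (a * c) * (a * c) * b) := by rw [hdb]; noncomm_ring
      _ = -(d * b) ^ 3 := by rw [hac']; noncomm_ring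
      _ = (c * a) ^ 3 := by rw [hdb]; noncomm_ring
  have h₂ : c * b * c * (a * d * a) = -(c * a) ^ 3 :=
    calc c * b * c * (a * d * a) = c * b * (c * a) * d * a := by noncomm_ring
      _ = -(c * (b * d) * (b * d) * a) := by rw [hca']; noncomm_ring
      _ = -(c * a) ^ 3 := by rw [hbd]; noncomm_ring
  rw [h₁, h₂, add_neg_cancel]

theorem braid_defects_anticommute {R : Type*} [Ring R] {a b c d : R}
    (hab : a * b = 0) (hba : b * a = 0) (hcd : c * d = 0) (hdc : d * c = 0)
    (hac : a * c + b * d = 0) (hca : c * a + d * b = 0) :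
    (d * a * d - a * d * a) * (c * b * c - b * c * b) +
      (c * b * c - b * c * b) * (d * a * d - a * d * a) = 0 :=
  calc _ = d * a * (d * c) * (b * c) + a * d * (a * b) * (c * b)
          + c * b * (c * d) * (a * d) + b * c * (b * a) * (d * a)
          - (d * a * d * (b * c * b) + c * b * c * (a * d * a))
          - (a * d * a * (c * b * c) + b * c * b * (d * a * d)) := by noncomm_ring
    _ = 0 := by
      rw [hab, hba, hcd, hdc, braid_cross_terms_cancel hac hca,
        braid_cross_terms_cancel ((add_comm _ _).trans hca) ((add_comm _ _).trans hac)]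
      noncomm_ring

theorem IsSelfAdjoint.eq_zero_of_mul_self_eq_zero {E : Type*} [NonUnitalNormedRing E]
    [StarRing E] [CStarRing E] {x : E} (hx : IsSelfAdjoint x) (h : x * x = 0) : x = 0 :=
  (CStarRing.star_mul_self_eq_zero_iff x).mp (by rwa [hx.star_eq])

theorem qiso_S3_braid_relation_splits_general
    {𝒜 : Type*} [NormedRing 𝒜] [StarRing 𝒜] [CStarRing 𝒜]
    [NormedAlgebra ℂ 𝒜]
    (A B C D : 𝒜)
    (hA : star A = A) (hD : star D = D)
    (h3 : A * B = 0) (h4 : B * A = 0)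
    (h5 : C * D = 0) (h6 : D * C = 0)
    (h7 : A * C + B * D = 0) (h8 : C * A + D * B = 0)
    (h9 : D * A * D + C * B * C = A * D * A + B * C * B) :
    D * A * D = A * D * A ∧ C * B * C = B * C * B := by
  set X := D * A * D - A * D * A
  have hY : C * B * C - B * C * B = -X := by
    rw [neg_sub, sub_eq_sub_iff_add_eq_add, add_comm (C * B * C)]
    exact h9
  have hXX : X * X + X * X = 0 := by
    have hanti := braid_defects_anticommute h3 h4 h5 h6 h7 h8
    rwa [hY, mul_neg, neg_mul, ← neg_add, neg_eq_zero] at hanti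
  have hX : X = 0 := by
    refine IsSelfAdjoint.eq_zero_of_mul_self_eq_zero
      ((IsSelfAdjoint.conjugate_self hA hD).sub (.conjugate_self hD hA)) ?_
    rw [← two_smul ℂ] at hXX
    exact (smul_eq_zero.mp hXX).resolve_left two_ne_zero
  exact ⟨sub_eq_zero.mp hX, sub_eq_zero.mp (by rw [hY, hX, neg_zero])⟩

/-- In a unital C*-algebra, let `A, B, C, D` be self-adjoint with
`A² + B² = 1`, `C² + D² = 1`, `AB = BA = 0`, `CD = DC = 0`, `AC + BD = 0`,
`CA + DB = 0` and `DAD + CBC = ADA + BCB`. Then `DAD = ADA` and `CBC = BCB`.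
(Splitting of the braid-type relation coming from `tst = sts` in `S₃`.) -/
theorem qiso_S3_braid_relation_splits
    {𝒜 : Type*} [NormedRing 𝒜] [StarRing 𝒜] [CStarRing 𝒜] [CompleteSpace 𝒜]
    [NormedAlgebra ℂ 𝒜] [StarModule ℂ 𝒜]
    (A B C D : 𝒜)
    (hA : star A = A) (hB : star B = B) (hC : star C = C) (hD : star D = D)
    (h1 : A ^ 2 + B ^ 2 = 1) (h2 : C ^ 2 + D ^ 2 = 1)
    (h3 : A * B = 0) (h4 : B * A = 0)
    (h5 : C * D = 0) (h6 : D * C = 0)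
    (h7 : A * C + B * D = 0) (h8 : C * A + D * B = 0)
    (h9 : D * A * D + C * B * C = A * D * A + B * C * B) :
    D * A * D = A * D * A ∧ C * B * C = B * C * B :=
  qiso_S3_braid_relation_splits_general A B C D hA hD h3 h4 h5 h6 h7 h8 h9
end

section
/- Let 𝒜 be a unital C*-algebra and A, B, C, D, E, F, G, H ∈ 𝒜. Suppose the 4×4 matrix U = [[A, B, C, D], [B*, A*, D*, C*], [E, F, G, H], [F*, E*, H*, G*]] over 𝒜 is unitary (U U* = U* U = 1, where U* is the conjugate-transpose), and suppose x y* = 0 and x* y = 0 for every pair of distinct elements x ≠ y from {A, B, C, D}, and likewise for every pair of distinct elements from {E, F, G, H}. Then the 4×4 matrix M = [[AA*, BB*, CC*, DD*], [EE*, FF*, GG*, HH*], [B*B, A*A, D*D, C*C], [F*F, E*E, H*H, G*G]] is a magic unitary: every entry of M is a projection, and the entries of each row and of each column of M sum to 1. -/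
/-!
Multiplying the row relation `∑ₖ xₖ xₖ* = 1` (a diagonal entry of `U U* = 1`) on the right by
one of its terms `x` and using the orthogonality `y* x = 0` gives `x x* x = x`: every entry of `U`
is a partial isometry, so `x x*` and `x* x` are projections. The rows of `M` are the rows of `U`
with each entry `x` replaced by `x x*` (rows 1 and 2 interchanged), so they sum to the diagonal
of `U U*`. Since `U (τ k) (τ j) = (U k j)*` for `τ = (0 1)(2 3)`, the columns of `M` sum to the
diagonal of `U* U`.
-/

/-- The fundamental `4 × 4` matrix `U = [[A,B,C,D],[B*,A*,D*,C*],[E,F,G,H],[F*,E*,H*,G*]]`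
appearing in the computation of `QISO⁺(𝔽₂, S)`. -/
def fundamentalMatrix {𝒜 : Type*} [Ring 𝒜] [StarRing 𝒜] (A B C D E F G H : 𝒜) :
    Matrix (Fin 4) (Fin 4) 𝒜 :=
  !![A, B, C, D;
     star B, star A, star D, star C;
     E, F, G, H;
     star F, star E, star H, star G]

/-- The `4 × 4` matrix `M` of range and initial projections
`[[AA*,BB*,CC*,DD*],[EE*,FF*,GG*,HH*],[B*B,A*A,D*D,C*C],[F*F,E*E,H*H,G*G]]`. -/
def projectionMatrix {𝒜 : Type*} [Ring 𝒜] [StarRing 𝒜] (A B C D E F G H : 𝒜) :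
    Matrix (Fin 4) (Fin 4) 𝒜 :=
  !![A * star A, B * star B, C * star C, D * star D;
     E * star E, F * star F, G * star G, H * star H;
     star B * B, star A * A, star D * D, star C * C;
     star F * F, star E * E, star H * H, star G * G]

open Matrix

def IsPartialIsometry {R : Type*} [Mul R] [Star R] (x : R) : Prop :=
  x * star x * x = x

namespace IsPartialIsometry

variable {R : Type*} [Semigroup R] [StarMul R] {x : R}

protected theorem star (hx : IsPartialIsometry x) : IsPartialIsometry (star x) := by
  simpa only [IsPartialIsometry, star_mul, star_star, mul_assoc] using congrArg star hx

@[simp]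
theorem _root_.isPartialIsometry_star_iff : IsPartialIsometry (star x) ↔ IsPartialIsometry x :=
  ⟨fun h ↦ star_star x ▸ h.star, IsPartialIsometry.star⟩

theorem isStarProjection_mul_star (hx : IsPartialIsometry x) : IsStarProjection (x * star x) where
  isIdempotentElem := by
    rw [IsIdempotentElem, ← mul_assoc, hx]
  isSelfAdjoint := by
    rw [IsSelfAdjoint, star_mul, star_star]

theorem isStarProjection_star_mul (hx : IsPartialIsometry x) : IsStarProjection (star x * x) := by
  simpa using hx.star.isStarProjection_mul_star

end IsPartialIsometry

theorem isPartialIsometry_of_sum_mul_star_eq_one {R ι : Type*} [Semiring R] [Star R] [Fintype ι]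
    (v : ι → R) (hsum : ∑ i, v i * star (v i) = 1)
    (horth : ∀ i j, i ≠ j → star (v i) * v j = 0) (i : ι) : IsPartialIsometry (v i) :=
  calc v i * star (v i) * v i
      = ∑ j, v j * star (v j) * v i :=
        (Fintype.sum_eq_single (f := fun j ↦ v j * star (v j) * v i) i
          fun j hji ↦ by rw [mul_assoc, horth j i hji, mul_zero]).symm
    _ = v i := by rw [← Finset.sum_mul, hsum, one_mul]

section MatrixDiagonal

variable {n R : Type*} [Fintype n] [NonUnitalSemiring R] [StarRing R]

theorem Matrix.mul_star_self_apply_self (U : Matrix n n R) (i : n) :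
    (U * star U) i i = ∑ j, U i j * star (U i j) := by
  simp [mul_apply]

theorem Matrix.star_mul_self_apply_self (U : Matrix n n R) (j : n) :
    (star U * U) j j = ∑ i, star (U i j) * U i j := by
  simp [mul_apply]

end MatrixDiagonal

section FundamentalMatrix

variable {𝒜 : Type*} [Ring 𝒜] [StarRing 𝒜] (A B C D E F G H : 𝒜)

theorem projectionMatrix_apply (i j : Fin 4) :
    projectionMatrix A B C D E F G H i j =
      fundamentalMatrix A B C D E F G H (Equiv.swap 1 2 i) j *
        star (fundamentalMatrix A B C D E F G H (Equiv.swap 1 2 i) j) := by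
  fin_cases i <;> fin_cases j <;> simp [projectionMatrix, fundamentalMatrix, Equiv.swap_apply_def]

theorem fundamentalMatrix_apply_swap_swap (k j : Fin 4) :
    fundamentalMatrix A B C D E F G H ((Equiv.swap 0 1 * Equiv.swap 2 3 : Equiv.Perm (Fin 4)) k)
        ((Equiv.swap 0 1 * Equiv.swap 2 3 : Equiv.Perm (Fin 4)) j) =
      star (fundamentalMatrix A B C D E F G H k j) := by
  fin_cases k <;> fin_cases j <;> simp [fundamentalMatrix, Equiv.swap_apply_def]

variable {A B C D E F G H}

theorem isPartialIsometry_fundamentalMatrix_apply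
    (hU : fundamentalMatrix A B C D E F G H * star (fundamentalMatrix A B C D E F G H) = 1)
    (horth₁ : ∀ i j : Fin 4, i ≠ j → star (![A, B, C, D] i) * ![A, B, C, D] j = 0)
    (horth₂ : ∀ i j : Fin 4, i ≠ j → star (![E, F, G, H] i) * ![E, F, G, H] j = 0)
    (k j : Fin 4) : IsPartialIsometry (fundamentalMatrix A B C D E F G H k j) := by
  have hrow (r : Fin 4) : ∑ j, fundamentalMatrix A B C D E F G H r j *
      star (fundamentalMatrix A B C D E F G H r j) = 1 := by
    rw [← mul_star_self_apply_self, hU, one_apply_eq]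
  have h₁ := isPartialIsometry_of_sum_mul_star_eq_one ![A, B, C, D] (hrow 0) horth₁
  have h₂ := isPartialIsometry_of_sum_mul_star_eq_one ![E, F, G, H] (hrow 2) horth₂
  have hABCD : IsPartialIsometry A ∧ IsPartialIsometry B ∧ IsPartialIsometry C ∧
      IsPartialIsometry D := ⟨h₁ 0, h₁ 1, h₁ 2, h₁ 3⟩
  have hEFGH : IsPartialIsometry E ∧ IsPartialIsometry F ∧ IsPartialIsometry G ∧
      IsPartialIsometry H := ⟨h₂ 0, h₂ 1, h₂ 2, h₂ 3⟩
  fin_cases k <;> fin_cases j <;> simp [fundamentalMatrix, hABCD, hEFGH]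

end FundamentalMatrix

theorem qiso_free_group_magic_unitary_general
    {𝒜 : Type*} [NormedRing 𝒜] [StarRing 𝒜]
    (A B C D E F G H : 𝒜)
    (hU1 : fundamentalMatrix A B C D E F G H * star (fundamentalMatrix A B C D E F G H) = 1)
    (hU2 : star (fundamentalMatrix A B C D E F G H) * fundamentalMatrix A B C D E F G H = 1)
    (horth1 : ∀ i j : Fin 4, i ≠ j →
      (![A, B, C, D] i) * star (![A, B, C, D] j) = 0 ∧
      star (![A, B, C, D] i) * (![A, B, C, D] j) = 0)
    (horth2 : ∀ i j : Fin 4, i ≠ j →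
      (![E, F, G, H] i) * star (![E, F, G, H] j) = 0 ∧
      star (![E, F, G, H] i) * (![E, F, G, H] j) = 0) :
    (∀ i j : Fin 4,
      star (projectionMatrix A B C D E F G H i j) = projectionMatrix A B C D E F G H i j ∧
      projectionMatrix A B C D E F G H i j * projectionMatrix A B C D E F G H i j =
        projectionMatrix A B C D E F G H i j) ∧
    (∀ i : Fin 4, ∑ j : Fin 4, projectionMatrix A B C D E F G H i j = 1) ∧
    (∀ j : Fin 4, ∑ i : Fin 4, projectionMatrix A B C D E F G H i j = 1) := by
  set U := fundamentalMatrix A B C D E F G H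
  have hU : ∀ k j, IsPartialIsometry (U k j) := isPartialIsometry_fundamentalMatrix_apply hU1
    (fun i j hij ↦ (horth1 i j hij).2) (fun i j hij ↦ (horth2 i j hij).2)
  let τ : Equiv.Perm (Fin 4) := Equiv.swap 0 1 * Equiv.swap 2 3
  refine ⟨fun i j ↦ ?_, fun i ↦ ?_, fun j ↦ ?_⟩
  · obtain ⟨hidem, hsa⟩ := (hU (Equiv.swap 1 2 i) j).isStarProjection_mul_star
    rw [projectionMatrix_apply]
    exact ⟨hsa, hidem⟩
  · simp_rw [projectionMatrix_apply]
    rw [← mul_star_self_apply_self, hU1, one_apply_eq]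
  · calc ∑ i, projectionMatrix A B C D E F G H i j
        = ∑ k, U k j * star (U k j) := by
          simp_rw [projectionMatrix_apply]
          exact Equiv.sum_comp (Equiv.swap 1 2) fun k ↦ U k j * star (U k j)
      _ = ∑ k, star (U k (τ j)) * U k (τ j) := by
          rw [← Equiv.sum_comp τ fun k ↦ star (U k (τ j)) * U k (τ j)]
          simp only [U, τ, fundamentalMatrix_apply_swap_swap, star_star]
      _ = 1 := by rw [← star_mul_self_apply_self, hU2, one_apply_eq]

/-- Let `𝒜` be a unital C*-algebra and `A, …, H ∈ 𝒜`. Suppose the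
matrix `U = [[A,B,C,D],[B*,A*,D*,C*],[E,F,G,H],[F*,E*,H*,G*]]` is unitary and that
`xy* = 0` and `x*y = 0` for every pair of distinct elements among `{A,B,C,D}` and
likewise among `{E,F,G,H}`. Then
`M = [[AA*,BB*,CC*,DD*],[EE*,FF*,GG*,HH*],[B*B,A*A,D*D,C*C],[F*F,E*E,H*H,G*G]]`
is a magic unitary: every entry is a projection, and every row and every column of `M`
sums to `1`. (Key structure of `QISO⁺(𝔽₂, S)`, Theorem 5.1.) -/
theorem qiso_free_group_magic_unitary
    {𝒜 : Type*} [NormedRing 𝒜] [StarRing 𝒜] [CStarRing 𝒜] [CompleteSpace 𝒜]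
    [NormedAlgebra ℂ 𝒜] [StarModule ℂ 𝒜]
    (A B C D E F G H : 𝒜)
    (hU1 : fundamentalMatrix A B C D E F G H * star (fundamentalMatrix A B C D E F G H) = 1)
    (hU2 : star (fundamentalMatrix A B C D E F G H) * fundamentalMatrix A B C D E F G H = 1)
    (horth1 : ∀ i j : Fin 4, i ≠ j →
      (![A, B, C, D] i) * star (![A, B, C, D] j) = 0 ∧
      star (![A, B, C, D] i) * (![A, B, C, D] j) = 0)
    (horth2 : ∀ i j : Fin 4, i ≠ j →
      (![E, F, G, H] i) * star (![E, F, G, H] j) = 0 ∧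
      star (![E, F, G, H] i) * (![E, F, G, H] j) = 0) :
    (∀ i j : Fin 4,
      star (projectionMatrix A B C D E F G H i j) = projectionMatrix A B C D E F G H i j ∧
      projectionMatrix A B C D E F G H i j * projectionMatrix A B C D E F G H i j =
        projectionMatrix A B C D E F G H i j) ∧
    (∀ i : Fin 4, ∑ j : Fin 4, projectionMatrix A B C D E F G H i j = 1) ∧
    (∀ j : Fin 4, ∑ i : Fin 4, projectionMatrix A B C D E F G H i j = 1) :=
  qiso_free_group_magic_unitary_general A B C D E F G H hU1 hU2 horth1 horth2
end

section
/- Let m ≥ 1 and let F = F(m) be the free group on m generators, with l its word-length function with respect to the standard symmetric generating set (i.e. the reduced-word length). Then for all fixed g, h ∈ F the set { a ∈ F : l(ha) − l(a) − l(hag) + l(ag) ≠ 0 } is finite. (Consequently the operator T_{g,h} on ℓ²(F) given by T_{g,h} δ_a = (l(ha) − l(a) − l(hag) + l(ag)) δ_{hag} is of finite rank, so the spectral triple on C*_r(F) with its canonical real structure satisfies the first order condition modulo compacts.) -/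
/-! The defect `l(ha) - l(a) - l(hag) + l(ag)` is additive in `h` and in `g` up to translating `a`
(a cocycle identity), so its support for a product is covered by translates of the supports for
the factors, and it suffices to take single letters `h = u`, `g = v`. Then `l(ua) - l(a)` is `-1`
or `1` according as the reduced word of `a` starts with `u⁻¹` or not, and right multiplication by
`v` only changes the last letter of that word, so the defect vanishes as soon as `l(a) ≥ 2`. -/

namespace FreeGroup

variable {α : Type*} [DecidableEq α]

def normMixedDiff (h g a : FreeGroup α) : ℤ :=
  (norm (h * a) : ℤ) - norm a - norm (h * a * g) + norm (a * g)

theorem toWord_mk_singleton_mul (u : α × Bool) (a : FreeGroup α) :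
    (mk [u] * a).toWord =
      if a.toWord.head? = some (u.1, !u.2) then a.toWord.tail else u :: a.toWord := by
  rw [toWord_mul, toWord_mk, reduce_singleton, List.singleton_append, reduce.cons, reduce_toWord]
  rcases a.toWord with _ | ⟨x, w⟩
  · simp
  · refine if_congr ?_ rfl rfl
    rw [List.head?_cons, Option.some.injEq, Prod.ext_iff]
    grind

theorem norm_mk_singleton_mul (u : α × Bool) (a : FreeGroup α) :
    (norm (mk [u] * a) : ℤ) = norm a + if a.toWord.head? = some (u.1, !u.2) then -1 else 1 := by
  unfold norm
  rw [toWord_mk_singleton_mul]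
  split_ifs with hu
  · rcases hw : a.toWord with _ | ⟨x, w⟩ <;> simp_all
  · simp

theorem toWord_mul_mk_singleton (a : FreeGroup α) (v : α × Bool) :
    (a * mk [v]).toWord = a.toWord.dropLast ∨ (a * mk [v]).toWord = a.toWord ++ [v] := by
  have hinv : a * mk [v] = (mk [(v.1, !v.2)] * a⁻¹)⁻¹ := by
    simp [inv_mk, invRev]
  rw [hinv, toWord_inv, toWord_mk_singleton_mul, toWord_inv]
  split_ifs
  · left
    simp [invRev, List.tail_reverse, ← List.map_dropLast, Function.comp_def]
  · right
    simp [invRev, Function.comp_def]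

theorem head?_toWord_mul_mk_singleton (a : FreeGroup α) (v : α × Bool) (ha : 2 ≤ norm a) :
    (a * mk [v]).toWord.head? = a.toWord.head? := by
  have hlen : 1 < a.toWord.length := ha
  rcases toWord_mul_mk_singleton a v with hw | hw <;> rw [hw]
  · simp [List.head?_dropLast, hlen]
  · exact List.head?_append_of_ne_nil _ (List.ne_nil_of_length_pos (by omega))

theorem normMixedDiff_mk_singleton_eq_zero (u v : α × Bool) (a : FreeGroup α) (ha : 2 ≤ norm a) :
    normMixedDiff (mk [u]) (mk [v]) a = 0 := by
  rw [normMixedDiff, mul_assoc, norm_mk_singleton_mul, norm_mk_singleton_mul,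
    head?_toWord_mul_mk_singleton a v ha]
  ring

theorem normMixedDiff_one_left (g : FreeGroup α) : normMixedDiff 1 g = 0 := by
  ext
  simp [normMixedDiff]

theorem normMixedDiff_one_right (h : FreeGroup α) : normMixedDiff h 1 = 0 := by
  ext
  simp [normMixedDiff]

theorem normMixedDiff_mul_left (h₁ h₂ g a : FreeGroup α) :
    normMixedDiff (h₁ * h₂) g a = normMixedDiff h₁ g (h₂ * a) + normMixedDiff h₂ g a := by
  simp only [normMixedDiff, mul_assoc]
  ring

theorem normMixedDiff_mul_right (h g₁ g₂ a : FreeGroup α) :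
    normMixedDiff h (g₁ * g₂) a = normMixedDiff h g₁ a + normMixedDiff h g₂ (a * g₁) := by
  simp only [normMixedDiff, mul_assoc]
  ring

theorem finite_setOf_norm_le [Finite α] (n : ℕ) : {a : FreeGroup α | norm a ≤ n}.Finite :=
  (List.finite_length_le (α × Bool) n).preimage toWord_injective.injOn

theorem induction_on_mk_singleton_mul {p : FreeGroup α → Prop} (a : FreeGroup α) (one : p 1)
    (mk_singleton_mul : ∀ u b, p b → p (mk [u] * b)) : p a := by
  rw [← mk_toWord (x := a)]
  induction a.toWord with
  | nil => exact one
  | cons u w ih => simpa only [mul_mk, List.singleton_append] using mk_singleton_mul u _ ih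

theorem support_normMixedDiff_mul_left_subset (h₁ h₂ g : FreeGroup α) :
    Function.support (normMixedDiff (h₁ * h₂) g) ⊆
      (h₂ * ·) ⁻¹' Function.support (normMixedDiff h₁ g) ∪ Function.support (normMixedDiff h₂ g) :=
  funext (normMixedDiff_mul_left h₁ h₂ g) ▸ Function.support_add _ _

theorem support_normMixedDiff_mul_right_subset (h g₁ g₂ : FreeGroup α) :
    Function.support (normMixedDiff h (g₁ * g₂)) ⊆
      Function.support (normMixedDiff h g₁) ∪ (· * g₁) ⁻¹' Function.support (normMixedDiff h g₂) :=
  funext (normMixedDiff_mul_right h g₁ g₂) ▸ Function.support_add _ _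

variable [Finite α]

theorem finite_support_normMixedDiff_mk_singleton_mk_singleton (u v : α × Bool) :
    (Function.support (normMixedDiff (mk [u]) (mk [v]))).Finite :=
  (finite_setOf_norm_le 1).subset fun a ha =>
    show norm a ≤ 1 from le_of_not_gt fun hlt => ha (normMixedDiff_mk_singleton_eq_zero u v a hlt)

theorem finite_support_normMixedDiff_mk_singleton (u : α × Bool) (g : FreeGroup α) :
    (Function.support (normMixedDiff (mk [u]) g)).Finite := by
  induction g using induction_on_mk_singleton_mul with
  | one => simp [normMixedDiff_one_right]
  | mk_singleton_mul v g ih =>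
    exact ((finite_support_normMixedDiff_mk_singleton_mk_singleton u v).union
      (ih.preimage (mul_left_injective _).injOn)).subset
      (support_normMixedDiff_mul_right_subset _ _ _)

theorem finite_support_normMixedDiff (h g : FreeGroup α) :
    (Function.support (normMixedDiff h g)).Finite := by
  induction h using induction_on_mk_singleton_mul with
  | one => simp [normMixedDiff_one_left]
  | mk_singleton_mul u h ih =>
    exact (((finite_support_normMixedDiff_mk_singleton u g).preimage
      (mul_right_injective _).injOn).union ih).subset
      (support_normMixedDiff_mul_left_subset _ _ _)

end FreeGroup

theorem freeGroup_first_order_condition_set_finite_general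
    (m : ℕ) (g h : FreeGroup (Fin m)) :
    {a : FreeGroup (Fin m) |
      (FreeGroup.norm (h * a) : ℤ) - (FreeGroup.norm a : ℤ)
        - (FreeGroup.norm (h * a * g) : ℤ) + (FreeGroup.norm (a * g) : ℤ) ≠ 0}.Finite :=
  FreeGroup.finite_support_normMixedDiff h g

/-- Let `F = F(m)` (`m ≥ 1`) be the free group on `m` generators
with word-length function `l`. For all fixed `g, h ∈ F` the set
`{a : l(ha) - l(a) - l(hag) + l(ag) ≠ 0}` is finite. (Hence the commutator
`[Jλ_gJ⁻¹, [D, λ_h]]` is of finite rank: the first order condition holds modulo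
compacts.) -/
theorem freeGroup_first_order_condition_set_finite
    (m : ℕ) (hm : 1 ≤ m) (g h : FreeGroup (Fin m)) :
    {a : FreeGroup (Fin m) |
      (FreeGroup.norm (h * a) : ℤ) - (FreeGroup.norm a : ℤ)
        - (FreeGroup.norm (h * a * g) : ℤ) + (FreeGroup.norm (a * g) : ℤ) ≠ 0}.Finite :=
  freeGroup_first_order_condition_set_finite_general m g h
end

section
/- Let 𝔽₂ be the free group on two generators with word-length function l, let γ ∈ 𝔽₂ and n ≥ 1, and let W_n = {κ ∈ 𝔽₂ : l(κ) = n} (a finite set). Then (3/4)·l(γ)²·card(W_n) ≤ ∑_{κ ∈ W_n} (l(γκ) − n)² ≤ l(γ)²·card(W_n). (Hence the ratio r_{n,γ} = ∑_{κ∈W_n} |l(γκ) − l(κ)|² / card(W_n) lies in the interval [(3/4)l(γ)², l(γ)²].) -/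
/-! The upper bound is the triangle inequality `|l(γκ) - l(κ)| ≤ l(γ)`. For the lower bound,
`γκ` is already reduced as written, so `l(γκ) = l(γ) + l(κ)`, unless `κ` begins with the inverse
of the last letter of `γ`. Relabelling letters by a permutation of the generators together with a
uniform swap of exponent signs preserves reduced words and acts transitively on the letters, so on
the sphere of radius `n ≥ 1` every letter begins the same number of words: for two generators a
quarter of them, and each of the other three quarters contributes exactly `l(γ)²`. -/

open Finset

namespace FreeGroup

variable {α : Type*}

theorem IsReduced.map_prodCongr {L : List (α × Bool)} (h : IsReduced L)
    (e : Equiv.Perm α) (g : Equiv.Perm Bool) : IsReduced (L.map (e.prodCongr g)) :=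
  List.isChain_map_of_isChain _ (fun a b hab heq => by
    simpa using congrArg g (hab (e.injective heq))) h

variable [DecidableEq α]

theorem abs_norm_mul_sub_norm_le (γ κ : FreeGroup α) :
    |((γ * κ).norm - κ.norm : ℝ)| ≤ γ.norm := by
  have hle : ((γ * κ).norm : ℝ) ≤ γ.norm + κ.norm := by exact_mod_cast norm_mul_le γ κ
  have hge : (κ.norm : ℝ) ≤ γ.norm + (γ * κ).norm := by
    have h := norm_mul_le γ⁻¹ (γ * κ)
    rw [inv_mul_cancel_left, norm_inv_eq] at h
    exact_mod_cast h
  exact abs_sub_le_iff.mpr ⟨by linarith, by linarith⟩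

theorem norm_mul_of_isReduced_append {x y : FreeGroup α}
    (h : IsReduced (x.toWord ++ y.toWord)) : (x * y).norm = x.norm + y.norm := by
  simp only [norm, toWord_mul, h.reduce_eq, List.length_append]

theorem norm_mul_of_head?_ne {x y : FreeGroup α}
    (h : ∀ a ∈ x.toWord.getLast?, y.toWord.head? ≠ some (a.1, !a.2)) :
    (x * y).norm = x.norm + y.norm := by
  refine norm_mul_of_isReduced_append
    (List.isChain_append.mpr ⟨isReduced_toWord, isReduced_toWord, ?_⟩)
  intro a ha b hb hab
  by_contra hne
  refine h a ha ?_
  rw [Option.mem_def.mp hb, Option.some_inj, Prod.ext_iff]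
  exact ⟨hab.symm, Bool.eq_not_of_ne (Ne.symm hne)⟩

def relabel (e : Equiv.Perm α) (g : Equiv.Perm Bool) (x : FreeGroup α) : FreeGroup α :=
  mk (x.toWord.map (e.prodCongr g))

section relabel

variable (e : Equiv.Perm α) (g : Equiv.Perm Bool)

theorem toWord_relabel (x : FreeGroup α) :
    (relabel e g x).toWord = x.toWord.map (e.prodCongr g) := by
  rw [relabel, toWord_mk, (isReduced_toWord.map_prodCongr e g).reduce_eq]

theorem norm_relabel (x : FreeGroup α) : (relabel e g x).norm = x.norm := by
  rw [norm, norm, toWord_relabel, List.length_map]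

theorem relabel_injective : Function.Injective (relabel e g) := fun x y h => by
  rw [← toWord_inj, ← (List.map_injective_iff.mpr (e.prodCongr g).injective).eq_iff,
    ← toWord_relabel, ← toWord_relabel, h]

end relabel

section sphere

variable {S : Finset (FreeGroup α)} {n : ℕ}

theorem card_filter_head?_le (hS : ∀ x, x ∈ S ↔ x.norm = n) (c d : α × Bool) :
    #{x ∈ S | x.toWord.head? = some c} ≤ #{x ∈ S | x.toWord.head? = some d} := by
  set e := Equiv.swap c.1 d.1
  set g := Equiv.swap c.2 d.2
  refine card_le_card_of_injOn (relabel e g) (fun x hx => ?_) (relabel_injective e g).injOn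
  simp only [coe_filter, Set.mem_ofPred_eq, hS] at hx ⊢
  refine ⟨(norm_relabel e g x).trans hx.1, ?_⟩
  rw [toWord_relabel, List.head?_map, hx.2, Option.map_some]
  exact congrArg some (Prod.ext (Equiv.swap_apply_left _ _) (Equiv.swap_apply_left _ _))

theorem card_mul_card_filter_head? [Fintype α] (hS : ∀ x, x ∈ S ↔ x.norm = n) (hn : n ≠ 0)
    (c : α × Bool) :
    Fintype.card (α × Bool) * #{x ∈ S | x.toWord.head? = some c} = #S := by
  have hnone : #{x ∈ S | x.toWord.head? = none} = 0 := by
    simp only [card_eq_zero, filter_eq_empty_iff, List.head?_eq_none_iff, hS]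
    intro x hx hx'
    rw [norm, hx', List.length_nil] at hx
    exact hn hx.symm
  have hfib : #S = ∑ o : Option (α × Bool), #{x ∈ S | x.toWord.head? = o} :=
    card_eq_sum_card_fiberwise fun _ _ => mem_univ _
  rw [hfib, Fintype.sum_option, hnone, zero_add,
    sum_congr rfl fun d _ => (card_filter_head?_le hS d c).antisymm
      (card_filter_head?_le hS c d), sum_const, smul_eq_mul, card_univ]

theorem sum_sq_norm_mul_sub_le (hS : ∀ x, x ∈ S ↔ x.norm = n) (γ : FreeGroup α) :
    ∑ κ ∈ S, ((γ * κ).norm - n : ℝ) ^ 2 ≤ (γ.norm : ℝ) ^ 2 * #S := by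
  have hterm : ∀ κ ∈ S, ((γ * κ).norm - n : ℝ) ^ 2 ≤ (γ.norm : ℝ) ^ 2 := by
    intro κ hκ
    rw [← (hS κ).mp hκ, sq_le_sq, Nat.abs_cast]
    exact abs_norm_mul_sub_norm_le γ κ
  calc ∑ κ ∈ S, ((γ * κ).norm - n : ℝ) ^ 2 ≤ ∑ _κ ∈ S, (γ.norm : ℝ) ^ 2 := sum_le_sum hterm
    _ = (γ.norm : ℝ) ^ 2 * #S := by rw [sum_const, nsmul_eq_mul, mul_comm]

theorem sub_one_mul_sq_norm_le_sum_sq_norm_mul_sub [Fintype α] (hS : ∀ x, x ∈ S ↔ x.norm = n)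
    (hn : n ≠ 0) (γ : FreeGroup α) :
    (Fintype.card (α × Bool) - 1 : ℝ) * (γ.norm : ℝ) ^ 2 * #S ≤
      Fintype.card (α × Bool) * ∑ κ ∈ S, ((γ * κ).norm - n : ℝ) ^ 2 := by
  set k : ℕ := Fintype.card (α × Bool)
  rcases hγ : γ.toWord.getLast? with _ | a
  · have hγ1 : γ.norm = 0 := by rw [norm, List.getLast?_eq_none_iff.mp hγ, List.length_nil]
    simp only [hγ1, CharP.cast_eq_zero, zero_pow two_ne_zero, mul_zero, zero_mul]
    positivity
  set B := {κ ∈ S | κ.toWord.head? = some (a.1, !a.2)}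
  have hB : (k : ℝ) * #B = #S := by exact_mod_cast card_mul_card_filter_head? hS hn _
  have hsplit : (#(S \ B) : ℝ) + #B = #S := by
    exact_mod_cast card_sdiff_add_card_eq_card (filter_subset _ _)
  have hgood : ∀ κ ∈ S \ B, ((γ * κ).norm - n : ℝ) ^ 2 = (γ.norm : ℝ) ^ 2 := by
    intro κ hκ
    obtain ⟨hκS, hκB⟩ := mem_sdiff.mp hκ
    rw [norm_mul_of_head?_ne (by simpa [hγ, B, hκS] using hκB), ← (hS κ).mp hκS]
    push_cast
    ring
  calc (k - 1 : ℝ) * (γ.norm : ℝ) ^ 2 * #S = k * (#(S \ B) * (γ.norm : ℝ) ^ 2) := by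
        linear_combination (γ.norm : ℝ) ^ 2 * hB - k * (γ.norm : ℝ) ^ 2 * hsplit
    _ = k * ∑ κ ∈ S \ B, ((γ * κ).norm - n : ℝ) ^ 2 := by
        rw [sum_congr rfl hgood, sum_const, nsmul_eq_mul]
    _ ≤ k * ∑ κ ∈ S, ((γ * κ).norm - n : ℝ) ^ 2 := by
        gcongr
        exact sdiff_subset

end sphere

end FreeGroup

/-- Let `𝔽₂` be the free group on two generators with word-length
function `l`, let `γ ∈ 𝔽₂` and `n ≥ 1`, and let `W_n = {κ : l κ = n}` (a finite set).
Then `(3/4)·l(γ)²·card(W_n) ≤ ∑_{κ ∈ W_n} (l(γκ) - n)² ≤ l(γ)²·card(W_n)`. -/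
theorem freeGroup_two_ratio_bounds
    (γ : FreeGroup (Fin 2)) (n : ℕ) (hn : 1 ≤ n)
    (hfin : {κ : FreeGroup (Fin 2) | FreeGroup.norm κ = n}.Finite) :
    (3 / 4 : ℝ) * (FreeGroup.norm γ : ℝ) ^ 2 * (hfin.toFinset.card : ℝ) ≤
      ∑ κ ∈ hfin.toFinset, ((FreeGroup.norm (γ * κ) : ℝ) - (n : ℝ)) ^ 2 ∧
    ∑ κ ∈ hfin.toFinset, ((FreeGroup.norm (γ * κ) : ℝ) - (n : ℝ)) ^ 2 ≤
      (FreeGroup.norm γ : ℝ) ^ 2 * (hfin.toFinset.card : ℝ) := by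
  have hS : ∀ κ, κ ∈ hfin.toFinset ↔ κ.norm = n := fun κ => hfin.mem_toFinset
  have hlower := FreeGroup.sub_one_mul_sq_norm_le_sum_sq_norm_mul_sub hS (by omega) γ
  have hcard : Fintype.card (Fin 2 × Bool) = 4 := rfl
  rw [hcard] at hlower
  push_cast at hlower
  exact ⟨by linarith, FreeGroup.sum_sq_norm_mul_sub_le hS γ⟩
end

section
/- Let 𝔽₂ be the free group on two generators with word-length function l, and let W_n = {κ ∈ 𝔽₂ : l(κ) = n}. If γ, γ′ ∈ 𝔽₂ satisfy l(γ) = l(γ′), then for every n ∈ ℕ: ∑_{κ ∈ W_n} (l(γκ) − n)² = ∑_{κ ∈ W_n} (l(γ′κ) − n)². (The quantity ∑_{κ ∈ W_n} |l(γκ) − l(κ)|² depends only on the length of γ, and not on its actual form.) -/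
/-!
Write `c(x, κ)` for the length of the common prefix of the reduced words of `x` and `κ`; then
`l(x⁻¹κ) = l(x) + l(κ) - 2 c(x, κ)`. So it suffices to find a length-preserving bijection `Φ` of
the free group with `c(γ'⁻¹, Φ κ) = c(γ⁻¹, κ)`, i.e. an automorphism of the Cayley tree fixing `1`
and sending `γ⁻¹` to `γ'⁻¹`. It replaces the common prefix of `κ` with `γ⁻¹` by the prefix of
`γ'⁻¹` of the same length, moves the letter at which `κ` branches off by a permutation of the
letters allowed at that vertex, and relabels the rest of `κ` by a signed swap of generators.
-/

namespace List

variable {β : Type*}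

theorem exists_mem_head?_of_length_eq {l l' : List β} (h : l.length = l'.length) {b : β}
    (hb : b ∈ l'.head?) : ∃ a, a ∈ l.head? := by
  cases l <;> cases l' <;> simp_all

theorem exists_mem_getLast?_of_length_eq {l l' : List β} (h : l.length = l'.length) {b : β}
    (hb : b ∈ l'.getLast?) : ∃ a, a ∈ l.getLast? := by
  cases l with
  | nil => cases l' <;> simp_all
  | cons a t => exact ⟨_, getLast?_eq_some_getLast (cons_ne_nil a t)⟩

variable [DecidableEq β]

def commonPrefixLength : List β → List β → ℕ
  | a :: l, b :: l' => if a = b then commonPrefixLength l l' + 1 else 0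
  | _, _ => 0

theorem commonPrefixLength_append_append (s l l' : List β) :
    commonPrefixLength (s ++ l) (s ++ l') = s.length + commonPrefixLength l l' := by
  induction s with
  | nil => simp
  | cons a s ih => simp only [cons_append, commonPrefixLength, ↓reduceIte, ih, length_cons]; omega

theorem commonPrefixLength_eq_zero_iff {l l' : List β} :
    commonPrefixLength l l' = 0 ↔ ∀ a ∈ l.head?, ∀ b ∈ l'.head?, a ≠ b := by
  cases l <;> cases l' <;> simp [commonPrefixLength]

theorem commonPrefixLength_le_length_left (l l' : List β) :
    commonPrefixLength l l' ≤ l.length := by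
  fun_induction commonPrefixLength l l' <;> simp_all

theorem commonPrefixLength_le_length_right (l l' : List β) :
    commonPrefixLength l l' ≤ l'.length := by
  fun_induction commonPrefixLength l l' <;> simp_all

theorem take_commonPrefixLength (l l' : List β) :
    l'.take (commonPrefixLength l l') = l.take (commonPrefixLength l l') := by
  fun_induction commonPrefixLength l l' <;> simp_all

theorem head?_drop_commonPrefixLength_ne (l l' : List β) :
    ∀ a ∈ (l.drop (commonPrefixLength l l')).head?,
      ∀ b ∈ (l'.drop (commonPrefixLength l l')).head?, a ≠ b := by
  refine commonPrefixLength_eq_zero_iff.1 ?_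
  fun_induction commonPrefixLength l l' <;> simp_all [commonPrefixLength]

end List

theorem Equiv.Perm.exists_apply_eq_of_option {β : Type*} {a a' b b' : Option β}
    (ha : ∀ x ∈ a, ∀ x' ∈ a', x ≠ x') (hb : ∀ y ∈ b, ∀ y' ∈ b', y ≠ y') :
    ∃ e : Equiv.Perm β, (∀ x ∈ a, ∀ y ∈ b, e x = y) ∧ ∀ x ∈ a', ∀ y ∈ b', e x = y := by
  classical
  have single : ∀ a b : Option β, ∃ e : Equiv.Perm β, ∀ x ∈ a, ∀ y ∈ b, e x = y := by
    rintro (_ | x) (_ | y)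
    all_goals first | exact ⟨Equiv.swap x y, by simp⟩ | exact ⟨1, by simp⟩
  rcases a with _ | x
  · simpa using single a' b'
  rcases b with _ | y
  · simpa using single a' b'
  rcases a' with _ | x'
  · simpa using single (some x) (some y)
  rcases b' with _ | y'
  · simpa using single (some x) (some y)
  simpa using MulAction.is_two_pretransitive_iff.1 (Equiv.Perm.isMultiplyPretransitive β 2)
    (ha x rfl x' rfl) (hb y rfl y' rfl)

namespace FreeGroup

variable {α : Type*}

def invLetter (x : α × Bool) : α × Bool := (x.1, !x.2)

@[simp]
theorem invLetter_invLetter (x : α × Bool) : invLetter (invLetter x) = x := by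
  simp [invLetter]

theorem rel_iff_ne_invLetter {x y : α × Bool} :
    (x.1 = y.1 → x.2 = y.2) ↔ y ≠ invLetter x := by
  obtain ⟨a, s⟩ := x; obtain ⟨b, t⟩ := y
  cases s <;> cases t <;> simp [invLetter, eq_comm]

theorem getLast?_invRev (L : List (α × Bool)) : (invRev L).getLast? = L.head?.map invLetter := by
  rw [show invRev L = (L.map invLetter).reverse from rfl, List.getLast?_reverse, List.head?_map]

theorem IsReduced.head?_drop_ne_invLetter {w : List (α × Bool)} (h : IsReduced w) (c : ℕ) :
    ∀ p ∈ (w.take c).getLast?, ∀ a ∈ (w.drop c).head?, a ≠ invLetter p := by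
  rw [← w.take_append_drop c] at h
  exact fun p hp a ha => rel_iff_ne_invLetter.1 ((List.isChain_append.1 h).2.2 p hp a ha)

/-- `ε c` permutes the letters that can follow the vertex `u.take c` of the Cayley tree, sending
the direction of `u` to that of `v` and the edge back to the root to the edge back to the root. -/
def IsBranchMatching (u v : List (α × Bool)) (ε : ℕ → Equiv.Perm (α × Bool)) : Prop :=
  ∀ c, (∀ a ∈ (u.drop c).head?, ∀ b ∈ (v.drop c).head?, ε c a = b) ∧
    ∀ p ∈ (u.take c).getLast?, ∀ q ∈ (v.take c).getLast?, ε c (invLetter p) = invLetter q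

theorem IsBranchMatching.symm {u v : List (α × Bool)} {ε : ℕ → Equiv.Perm (α × Bool)}
    (h : IsBranchMatching u v ε) : IsBranchMatching v u fun c => (ε c).symm := fun c =>
  ⟨fun b hb a ha => (Equiv.symm_apply_eq _).2 ((h c).1 a ha b hb).symm,
    fun q hq p hp => (Equiv.symm_apply_eq _).2 ((h c).2 p hp q hq).symm⟩

theorem exists_isBranchMatching {u v : List (α × Bool)} (hu : IsReduced u) (hv : IsReduced v) :
    ∃ ε, IsBranchMatching u v ε := by
  have separated {w : List (α × Bool)} (hw : IsReduced w) (c : ℕ) :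
      ∀ a ∈ (w.drop c).head?, ∀ p' ∈ (w.take c).getLast?.map invLetter, a ≠ p' := by
    intro a ha p' hp'
    obtain ⟨p, hp, rfl⟩ := Option.mem_map.1 hp'
    exact hw.head?_drop_ne_invLetter c p hp a ha
  choose ε hε using fun c => Equiv.Perm.exists_apply_eq_of_option (separated hu c) (separated hv c)
  exact ⟨ε, fun c => ⟨(hε c).1, fun p hp q hq =>
    (hε c).2 _ (Option.mem_map_of_mem _ hp) _ (Option.mem_map_of_mem _ hq)⟩⟩

variable [DecidableEq α]

/-- The substitution of letters induced by the automorphism of `FreeGroup α` that swaps the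
generators `x.1` and `y.1`, inverting both if `x` and `y` have opposite signs. -/
def signedSwap (x y : α × Bool) (z : α × Bool) : α × Bool :=
  (Equiv.swap x.1 y.1 z.1, xor z.2 (decide (z.1 = x.1 ∨ z.1 = y.1) && xor x.2 y.2))

@[simp]
theorem signedSwap_self_left (x y : α × Bool) : signedSwap x y x = y := by
  obtain ⟨a, s⟩ := x; obtain ⟨b, t⟩ := y
  cases s <;> cases t <;> simp [signedSwap]

theorem signedSwap_symm_signedSwap (x y z : α × Bool) : signedSwap y x (signedSwap x y z) = z := by
  obtain ⟨a, s⟩ := x; obtain ⟨b, t⟩ := y; obtain ⟨c, r⟩ := z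
  by_cases hca : c = a <;> by_cases hcb : c = b <;> subst_vars <;>
    cases s <;> cases t <;> cases r <;> simp_all [signedSwap, Equiv.swap_apply_of_ne_of_ne]

theorem signedSwap_rel {x y a b : α × Bool} (h : a.1 = b.1 → a.2 = b.2) :
    (signedSwap x y a).1 = (signedSwap x y b).1 → (signedSwap x y a).2 = (signedSwap x y b).2 := by
  simp only [signedSwap, (Equiv.injective _).eq_iff]
  intro hab
  rw [hab, h hab]

theorem IsReduced.map_signedSwap {L : List (α × Bool)} (h : IsReduced L) (x y : α × Bool) :
    IsReduced (L.map (signedSwap x y)) :=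
  List.isChain_map _ |>.2 <| h.imp fun _ _ => signedSwap_rel

-- The tail is relabelled by an automorphism of the free group, so the word stays reduced.
def branchMap (ε : Equiv.Perm (α × Bool)) : List (α × Bool) → List (α × Bool)
  | [] => []
  | x :: t => ε x :: t.map (signedSwap x (ε x))

@[simp]
theorem length_branchMap (ε : Equiv.Perm (α × Bool)) (w : List (α × Bool)) :
    (branchMap ε w).length = w.length := by
  cases w <;> simp [branchMap]

@[simp]
theorem head?_branchMap (ε : Equiv.Perm (α × Bool)) (w : List (α × Bool)) :
    (branchMap ε w).head? = w.head?.map ε := by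
  cases w <;> simp [branchMap]

theorem branchMap_symm_branchMap (ε : Equiv.Perm (α × Bool)) (w : List (α × Bool)) :
    branchMap ε.symm (branchMap ε w) = w := by
  cases w with
  | nil => rfl
  | cons x t => simp [branchMap, Function.comp_def, signedSwap_symm_signedSwap]

theorem IsReduced.branchMap {w : List (α × Bool)} (h : IsReduced w) (ε : Equiv.Perm (α × Bool)) :
    IsReduced (branchMap ε w) := by
  cases w with
  | nil => exact .nil
  | cons x t =>
    refine List.isChain_cons.2 ⟨?_, (h.infix (List.suffix_cons x t).isInfix).map_signedSwap _ _⟩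
    intro y hy
    rw [List.head?_map, Option.mem_map] at hy
    obtain ⟨z, hz, rfl⟩ := hy
    simpa using signedSwap_rel (x := x) (y := ε x) (List.isChain_cons.1 h |>.1 z hz)

def treeTransport (u v : List (α × Bool)) (ε : ℕ → Equiv.Perm (α × Bool))
    (w : List (α × Bool)) : List (α × Bool) :=
  v.take (u.commonPrefixLength w) ++
    branchMap (ε (u.commonPrefixLength w)) (w.drop (u.commonPrefixLength w))

section treeTransport

variable {u v : List (α × Bool)} {ε : ℕ → Equiv.Perm (α × Bool)}

theorem length_treeTransport (hlen : u.length = v.length) (w : List (α × Bool)) :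
    (treeTransport u v ε w).length = w.length := by
  have hcu := u.commonPrefixLength_le_length_left w
  have hcw := u.commonPrefixLength_le_length_right w
  simp only [treeTransport, List.length_append, List.length_take, length_branchMap,
    List.length_drop]
  omega

theorem commonPrefixLength_treeTransport (hlen : u.length = v.length)
    (hε : IsBranchMatching u v ε) (w : List (α × Bool)) :
    v.commonPrefixLength (treeTransport u v ε w) = u.commonPrefixLength w := by
  set c := u.commonPrefixLength w with hc
  have hcu : c ≤ u.length := u.commonPrefixLength_le_length_left w
  have hdiverge : (v.drop c).commonPrefixLength (branchMap (ε c) (w.drop c)) = 0 := by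
    refine List.commonPrefixLength_eq_zero_iff.2 fun b hb y hy => ?_
    obtain ⟨x, hx, rfl⟩ := Option.mem_map.1 (head?_branchMap (ε c) _ ▸ hy)
    obtain ⟨a, ha⟩ := List.exists_mem_head?_of_length_eq (l := u.drop c) (by simp [hlen]) hb
    have hxa := u.head?_drop_commonPrefixLength_ne w a ha x hx
    rw [← (hε c).1 a ha b hb]
    exact (ε c).injective.ne hxa
  have split := List.commonPrefixLength_append_append (v.take c) (v.drop c)
    (branchMap (ε c) (w.drop c))
  rw [List.take_append_drop] at split
  rw [treeTransport, ← hc, split, hdiverge, List.length_take]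
  omega

theorem IsReduced.treeTransport (hv : IsReduced v) {w : List (α × Bool)} (hw : IsReduced w)
    (hlen : u.length = v.length) (hε : IsBranchMatching u v ε) :
    IsReduced (treeTransport u v ε w) := by
  set c := u.commonPrefixLength w
  show IsReduced (v.take c ++ FreeGroup.branchMap (ε c) (w.drop c))
  refine List.isChain_append.2 ⟨hv.infix (List.take_prefix c v).isInfix,
    (hw.infix (List.drop_suffix c w).isInfix).branchMap _, fun q hq y hy => ?_⟩
  obtain ⟨x, hx, rfl⟩ := Option.mem_map.1 (head?_branchMap (ε c) _ ▸ hy)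
  obtain ⟨p, hp⟩ := List.exists_mem_getLast?_of_length_eq (l := u.take c) (by simp [hlen]) hq
  have hxp := hw.head?_drop_ne_invLetter c p (u.take_commonPrefixLength w ▸ hp) x hx
  rw [rel_iff_ne_invLetter, ← (hε c).2 p hp q hq]
  exact (ε c).injective.ne hxp

theorem treeTransport_symm_treeTransport (hlen : u.length = v.length)
    (hε : IsBranchMatching u v ε) (w : List (α × Bool)) :
    treeTransport v u (fun c => (ε c).symm) (treeTransport u v ε w) = w := by
  have hcu := u.commonPrefixLength_le_length_left w
  rw [treeTransport, commonPrefixLength_treeTransport hlen hε, treeTransport,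
    List.drop_left' (by rw [List.length_take]; omega), branchMap_symm_branchMap,
    ← u.take_commonPrefixLength w, List.take_append_drop]

end treeTransport

theorem IsReduced.invRev {L : List (α × Bool)} (h : IsReduced L) : IsReduced (invRev L) :=
  isReduced_iff_reduce_eq.2 (reduce_invRev.trans (congrArg _ h.reduce_eq))

theorem IsReduced.norm_mk {L : List (α × Bool)} (h : IsReduced L) : norm (mk L) = L.length := by
  rw [norm, toWord_mk, h.reduce_eq]

theorem norm_inv_mul_add_two_mul_commonPrefixLength (x y : FreeGroup α) :
    norm (x⁻¹ * y) + 2 * x.toWord.commonPrefixLength y.toWord = norm x + norm y := by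
  set c := x.toWord.commonPrefixLength y.toWord
  have hcx : c ≤ x.toWord.length := List.commonPrefixLength_le_length_left _ _
  have hcy : c ≤ y.toWord.length := List.commonPrefixLength_le_length_right _ _
  set u := x.toWord.drop c
  set w := y.toWord.drop c
  have hx : x = mk (x.toWord.take c) * mk u := by rw [mul_mk, List.take_append_drop, mk_toWord]
  have hy : y = mk (x.toWord.take c) * mk w := by
    rw [mul_mk, ← List.take_commonPrefixLength, List.take_append_drop, mk_toWord]
  have hreduced : IsReduced (invRev u ++ w) := by
    refine List.isChain_append.2 ⟨(isReduced_toWord.infix (List.drop_suffix c _).isInfix).invRev,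
      isReduced_toWord.infix (List.drop_suffix c _).isInfix, fun p hp b hb => ?_⟩
    rw [getLast?_invRev] at hp
    obtain ⟨a, ha, rfl⟩ := Option.mem_map.1 hp
    have hab := List.head?_drop_commonPrefixLength_ne _ _ a ha b hb
    rw [rel_iff_ne_invLetter, invLetter_invLetter]
    exact hab.symm
  have hmul : x⁻¹ * y = mk (invRev u ++ w) := by
    rw [hx, hy, mul_inv_rev, mul_assoc, inv_mul_cancel_left, inv_mk, mul_mk]
  rw [hmul, hreduced.norm_mk, norm, norm, List.length_append, invRev_length, List.length_drop,
    List.length_drop]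
  omega

section treeTransportEquiv

variable {u v : List (α × Bool)} {ε : ℕ → Equiv.Perm (α × Bool)}

theorem toWord_mk_treeTransport (hv : IsReduced v) (hlen : u.length = v.length)
    (hε : IsBranchMatching u v ε) (κ : FreeGroup α) :
    (mk (treeTransport u v ε κ.toWord)).toWord = treeTransport u v ε κ.toWord := by
  rw [toWord_mk, (hv.treeTransport isReduced_toWord hlen hε).reduce_eq]

theorem mk_treeTransport_symm_mk_treeTransport (hv : IsReduced v) (hlen : u.length = v.length)
    (hε : IsBranchMatching u v ε) (κ : FreeGroup α) :
    mk (treeTransport v u (fun c => (ε c).symm)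
      (mk (treeTransport u v ε κ.toWord)).toWord) = κ := by
  rw [toWord_mk_treeTransport hv hlen hε, treeTransport_symm_treeTransport hlen hε, mk_toWord]

def treeTransportEquiv (hu : IsReduced u) (hv : IsReduced v) (hlen : u.length = v.length)
    (hε : IsBranchMatching u v ε) : FreeGroup α ≃ FreeGroup α where
  toFun κ := mk (treeTransport u v ε κ.toWord)
  invFun κ := mk (treeTransport v u (fun c => (ε c).symm) κ.toWord)
  left_inv := mk_treeTransport_symm_mk_treeTransport hv hlen hε
  right_inv κ := by
    simpa only [Equiv.symm_symm] using
      mk_treeTransport_symm_mk_treeTransport hu hlen.symm hε.symm κ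

variable (hu : IsReduced u) (hv : IsReduced v) (hlen : u.length = v.length)
  (hε : IsBranchMatching u v ε)

include hu

theorem norm_treeTransportEquiv (κ : FreeGroup α) :
    norm (treeTransportEquiv hu hv hlen hε κ) = norm κ := by
  rw [norm, treeTransportEquiv, Equiv.coe_fn_mk, toWord_mk_treeTransport hv hlen hε,
    length_treeTransport hlen, norm]

theorem commonPrefixLength_treeTransportEquiv (κ : FreeGroup α) :
    v.commonPrefixLength (treeTransportEquiv hu hv hlen hε κ).toWord =
      u.commonPrefixLength κ.toWord := by
  rw [treeTransportEquiv, Equiv.coe_fn_mk, toWord_mk_treeTransport hv hlen hε,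
    commonPrefixLength_treeTransport hlen hε]

end treeTransportEquiv

theorem exists_equiv_norm_mul_eq (x y : FreeGroup α) (h : norm x = norm y) :
    ∃ Φ : FreeGroup α ≃ FreeGroup α, ∀ κ, norm (Φ κ) = norm κ ∧ norm (y * Φ κ) = norm (x * κ) := by
  have hlen : x⁻¹.toWord.length = y⁻¹.toWord.length := by
    rw [← norm, ← norm, norm_inv_eq, norm_inv_eq, h]
  obtain ⟨ε, hε⟩ :=
    exists_isBranchMatching (isReduced_toWord (x := x⁻¹)) (isReduced_toWord (x := y⁻¹))
  refine ⟨treeTransportEquiv isReduced_toWord isReduced_toWord hlen hε, fun κ => ?_⟩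
  have hnorm := norm_treeTransportEquiv isReduced_toWord isReduced_toWord hlen hε κ
  have hprefix := commonPrefixLength_treeTransportEquiv isReduced_toWord isReduced_toWord hlen hε κ
  have hx := norm_inv_mul_add_two_mul_commonPrefixLength x⁻¹ κ
  have hy := norm_inv_mul_add_two_mul_commonPrefixLength y⁻¹
    (treeTransportEquiv isReduced_toWord isReduced_toWord hlen hε κ)
  rw [inv_inv, norm_inv_eq] at hx hy
  refine ⟨hnorm, ?_⟩
  omega

end FreeGroup

/-- In the free group `𝔽₂` on two generators with word-length
function `l`, if `l γ = l γ'`, then for every `n` the sums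
`∑_{κ ∈ W_n} (l(γκ) - n)²` and `∑_{κ ∈ W_n} (l(γ'κ) - n)²` coincide: the quantity
depends only on the length of `γ` and not on its actual form. -/
theorem freeGroup_two_sum_depends_only_on_length
    (γ γ' : FreeGroup (Fin 2)) (hγγ' : FreeGroup.norm γ = FreeGroup.norm γ')
    (n : ℕ) (hfin : {κ : FreeGroup (Fin 2) | FreeGroup.norm κ = n}.Finite) :
    ∑ κ ∈ hfin.toFinset, ((FreeGroup.norm (γ * κ) : ℝ) - (n : ℝ)) ^ 2 =
      ∑ κ ∈ hfin.toFinset, ((FreeGroup.norm (γ' * κ) : ℝ) - (n : ℝ)) ^ 2 := by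
  obtain ⟨Φ, hΦ⟩ := FreeGroup.exists_equiv_norm_mul_eq γ γ' hγγ'
  exact Finset.sum_equiv Φ (fun κ => by simp [(hΦ κ).1]) fun κ _ => by rw [(hΦ κ).2]
end

section
/- Let a : ℕ → ℝ and r : ℕ → ℝ be sequences, C ≥ 1 a real number, R ∈ ℝ and m ∈ ℕ, such that 1 ≤ a(n) ≤ Cⁿ for all n and r(n) = R for all n ≥ m. Then the quotient t ↦ (∑_{n=0}^{∞} r(n)·a(n)·e^{−t n²}) / (∑_{n=0}^{∞} a(n)·e^{−t n²}) is well defined for every t > 0 (both series converge and the denominator is nonzero) and converges to R as t → 0⁺. (Applied with a(n) = card(W_n) and r(n) = r_{n,γ}, this shows that the Laplacian eigenvalue c_γ = lim_{t→0⁺} ∑_{κ} |l(γκ) − l(κ)|² e^{−t l(κ)²} / ∑_{κ} e^{−t l(κ)²} exists and equals R_{l(γ)}, establishing admissibility of the spectral triple on C*_r(𝔽₂).) -/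
/-!
The Gaussian factor `e^{-t n²}` beats any exponential growth `Cⁿ`, so both series converge for
`t > 0`. Since `r n = R` for `n ≥ m`, the numerator differs from `R` times the denominator by a
finite sum, bounded by `∑_{n<m} |r n - R| a n` uniformly in `t`; the denominator dominates
`∑_{n<K} e^{-t n²} → K` for every `K`, so it tends to infinity as `t → 0⁺`, and the quotient
tends to `R`.
-/

open Filter Topology Finset

theorem summable_pow_mul_exp_neg_mul_sq (C : ℝ) {t : ℝ} (ht : 0 < t) :
    Summable fun n : ℕ => C ^ n * Real.exp (-t * (n : ℝ) ^ 2) := by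
  -- For `n ≥ N`, `exp (-t n²) ≤ (exp (-t N))ⁿ`, so the series is dominated by a geometric one
  -- of ratio `|C| exp (-t N) < 1`.
  have hq : Tendsto (fun N : ℕ => |C| * Real.exp (-t) ^ N) atTop (𝓝 0) := by
    simpa using (tendsto_pow_atTop_nhds_zero_of_lt_one (Real.exp_nonneg (-t))
      (Real.exp_lt_one_iff.2 (neg_lt_zero.2 ht))).const_mul |C|
  obtain ⟨N, hN⟩ := (hq.eventually_lt_const zero_lt_one).exists
  refine Summable.of_norm_bounded_eventually_nat
    (summable_geometric_of_lt_one (by positivity) hN) ?_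
  filter_upwards [eventually_ge_atTop N] with n hn
  have hexp : Real.exp (-t * (n : ℝ) ^ 2) ≤ (Real.exp (-t) ^ N) ^ n := by
    rw [← pow_mul, ← Real.exp_nat_mul, Real.exp_le_exp]
    have hNn : (N : ℝ) ≤ n := by exact_mod_cast hn
    push_cast
    nlinarith [mul_nonneg (mul_nonneg ht.le (Nat.cast_nonneg (α := ℝ) n)) (sub_nonneg.2 hNn)]
  rw [norm_mul, norm_pow, Real.norm_eq_abs, Real.norm_eq_abs, Real.abs_exp, mul_pow]
  gcongr

theorem summable_mul_of_eventually_eq_const {g r : ℕ → ℝ} {R : ℝ} {m : ℕ} (hg : Summable g)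
    (hr : ∀ n, m ≤ n → r n = R) : Summable fun n => r n * g n :=
  (hg.mul_left R).congr_cofinite <| Nat.cofinite_eq_atTop ▸
    (eventually_ge_atTop m).mono fun n hn => show R * g n = r n * g n by rw [hr n hn]

theorem abs_tsum_mul_sub_mul_tsum_le {g r : ℕ → ℝ} {R : ℝ} {m : ℕ} (hg : Summable g)
    (hr : ∀ n, m ≤ n → r n = R) :
    |∑' n, r n * g n - R * ∑' n, g n| ≤ ∑ n ∈ range m, |r n - R| * |g n| := by
  have hfinite : ∑' n, (r n - R) * g n = ∑ n ∈ range m, (r n - R) * g n :=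
    tsum_eq_sum fun n hn => by rw [hr n (by simpa using hn), sub_self, zero_mul]
  calc |∑' n, r n * g n - R * ∑' n, g n|
      = |∑ n ∈ range m, (r n - R) * g n| := by
        rw [← hfinite, ← tsum_mul_left, ← (summable_mul_of_eventually_eq_const hg hr).tsum_sub
          (hg.mul_left R)]
        simp only [sub_mul]
    _ ≤ ∑ n ∈ range m, |r n - R| * |g n| :=
        (abs_sum_le_sum_abs (fun n => (r n - R) * g n) (range m)).trans_eq (by simp only [abs_mul])

theorem tendsto_div_of_abs_sub_mul_le {α : Type*} {l : Filter α} {N D : α → ℝ} {R B : ℝ}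
    (hD : Tendsto D l atTop) (hB : ∀ᶠ x in l, |N x - R * D x| ≤ B) :
    Tendsto (fun x => N x / D x) l (𝓝 R) := by
  have hsmall : Tendsto (fun x => (N x - R * D x) / D x) l (𝓝 0) := by
    refine squeeze_zero_norm' ?_ (tendsto_const_nhds (x := B).div_atTop hD)
    filter_upwards [hB, hD.eventually_gt_atTop 0] with x hx hDx
    rw [norm_div, Real.norm_eq_abs, Real.norm_eq_abs, abs_of_pos hDx]
    exact div_le_div_of_nonneg_right hx hDx.le
  refine (add_zero R ▸ hsmall.const_add R).congr' ?_
  filter_upwards [hD.eventually_gt_atTop 0] with x hx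
  field_simp
  ring

theorem tendsto_tsum_mul_exp_neg_mul_sq_atTop {a : ℕ → ℝ} (ha : ∀ n, 1 ≤ a n)
    (hs : ∀ t : ℝ, 0 < t → Summable fun n : ℕ => a n * Real.exp (-t * (n : ℝ) ^ 2)) :
    Tendsto (fun t : ℝ => ∑' n : ℕ, a n * Real.exp (-t * (n : ℝ) ^ 2)) (𝓝[>] 0) atTop := by
  refine tendsto_atTop.2 fun b => ?_
  obtain ⟨K, hK⟩ := exists_nat_gt b
  have hpartial : Tendsto (fun t : ℝ => ∑ n ∈ range K, Real.exp (-t * (n : ℝ) ^ 2)) (𝓝 0) (𝓝 K) := by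
    have hcont : Continuous fun t : ℝ => ∑ n ∈ range K, Real.exp (-t * (n : ℝ) ^ 2) := by fun_prop
    simpa using hcont.tendsto 0
  filter_upwards [nhdsWithin_le_nhds (hpartial.eventually_const_le hK), self_mem_nhdsWithin]
    with t hbt (ht : 0 < t)
  calc b ≤ ∑ n ∈ range K, Real.exp (-t * (n : ℝ) ^ 2) := hbt
    _ ≤ ∑ n ∈ range K, a n * Real.exp (-t * (n : ℝ) ^ 2) :=
        sum_le_sum fun n _ => le_mul_of_one_le_left (Real.exp_nonneg _) (ha n)
    _ ≤ ∑' n : ℕ, a n * Real.exp (-t * (n : ℝ) ^ 2) :=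
        (hs t ht).sum_le_tsum _ fun n _ => mul_nonneg (zero_le_one.trans (ha n)) (Real.exp_nonneg _)

theorem laplacian_eigenvalue_limit_general
    (a r : ℕ → ℝ) (C : ℝ) (R : ℝ) (m : ℕ)
    (ha : ∀ n : ℕ, 1 ≤ a n ∧ a n ≤ C ^ n)
    (hr : ∀ n : ℕ, m ≤ n → r n = R) :
    (∀ t : ℝ, 0 < t →
      Summable (fun n : ℕ => r n * a n * Real.exp (-t * (n : ℝ) ^ 2)) ∧
      Summable (fun n : ℕ => a n * Real.exp (-t * (n : ℝ) ^ 2)) ∧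
      (∑' n : ℕ, a n * Real.exp (-t * (n : ℝ) ^ 2)) ≠ 0) ∧
    Tendsto
      (fun t : ℝ =>
        (∑' n : ℕ, r n * a n * Real.exp (-t * (n : ℝ) ^ 2)) /
          (∑' n : ℕ, a n * Real.exp (-t * (n : ℝ) ^ 2)))
      (𝓝[>] (0 : ℝ)) (𝓝 R) := by
  have hweight_nonneg (t : ℝ) (n : ℕ) : 0 ≤ a n * Real.exp (-t * (n : ℝ) ^ 2) :=
    mul_nonneg (zero_le_one.trans (ha n).1) (Real.exp_nonneg _)
  have hden (t : ℝ) (ht : 0 < t) : Summable fun n : ℕ => a n * Real.exp (-t * (n : ℝ) ^ 2) :=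
    (summable_pow_mul_exp_neg_mul_sq C ht).of_nonneg_of_le (hweight_nonneg t)
      fun n => mul_le_mul_of_nonneg_right (ha n).2 (Real.exp_nonneg _)
  refine ⟨fun t ht => ⟨?_, hden t ht, ?_⟩, ?_⟩
  · simpa only [mul_assoc] using summable_mul_of_eventually_eq_const (hden t ht) hr
  · exact ((hden t ht).tsum_pos (hweight_nonneg t) 0
      (mul_pos (zero_lt_one.trans_le (ha 0).1) (Real.exp_pos _))).ne'
  refine tendsto_div_of_abs_sub_mul_le (B := ∑ n ∈ range m, |r n - R| * a n)
    (tendsto_tsum_mul_exp_neg_mul_sq_atTop (fun n => (ha n).1) hden) ?_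
  filter_upwards [self_mem_nhdsWithin] with t (ht : 0 < t)
  simp only [mul_assoc]
  refine (abs_tsum_mul_sub_mul_tsum_le (hden t ht) hr).trans (sum_le_sum fun n _ => ?_)
  rw [abs_of_nonneg (hweight_nonneg t n)]
  gcongr
  exact mul_le_of_le_one_right (zero_le_one.trans (ha n).1)
    (Real.exp_le_one_iff.2 (by nlinarith [sq_nonneg (n : ℝ)]))

/-- Let `a, r : ℕ → ℝ`, `C ≥ 1`, `R ∈ ℝ` and `m ∈ ℕ` with
`1 ≤ a n ≤ Cⁿ` for all `n` and `r n = R` for all `n ≥ m`. Then for every `t > 0`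
both series `∑ r n · a n · e^{-t n²}` and `∑ a n · e^{-t n²}` converge with nonzero
denominator, and the quotient
`t ↦ (∑' n, r n · a n · e^{-t n²}) / (∑' n, a n · e^{-t n²})` tends to `R` as
`t → 0⁺`. (Existence of the Laplacian eigenvalues `c_γ = R_{l(γ)}` for `C*_r(𝔽₂)`.) -/
theorem laplacian_eigenvalue_limit
    (a r : ℕ → ℝ) (C : ℝ) (hC : 1 ≤ C) (R : ℝ) (m : ℕ)
    (ha : ∀ n : ℕ, 1 ≤ a n ∧ a n ≤ C ^ n)
    (hr : ∀ n : ℕ, m ≤ n → r n = R) :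
    (∀ t : ℝ, 0 < t →
      Summable (fun n : ℕ => r n * a n * Real.exp (-t * (n : ℝ) ^ 2)) ∧
      Summable (fun n : ℕ => a n * Real.exp (-t * (n : ℝ) ^ 2)) ∧
      (∑' n : ℕ, a n * Real.exp (-t * (n : ℝ) ^ 2)) ≠ 0) ∧
    Tendsto
      (fun t : ℝ =>
        (∑' n : ℕ, r n * a n * Real.exp (-t * (n : ℝ) ^ 2)) /
          (∑' n : ℕ, a n * Real.exp (-t * (n : ℝ) ^ 2)))
      (𝓝[>] (0 : ℝ)) (𝓝 R) :=
  laplacian_eigenvalue_limit_general a r C R m ha hr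
end
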